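/- Let K and L be number fields with [K:ℚ] = [L:ℚ]. Suppose there exists a group isomorphism φ : P_K^1 → P_L^1 such that N(φ(I)) = N(I) for every I ∈ P_K^1. Then for every rational prime p, the ideal pO_K is a prime ideal of O_K if and only if pO_L is a prime ideal of O_L. -/

import Mathlib

open NumberField nonZeroDivisors

/-- The subgroup of `Kˣ` consisting of the totally positive elements. -/
def totallyPositiveUnits (K : Type*) [Field K] : Subgroup Kˣ where
  carrier := {u | ∀ φ : K →+* ℝ, 0 < φ (u : K)}
  one_mem' := fun φ => by simp
  mul_mem' := fun {a b} ha hb φ => by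
    rw [Units.val_mul, map_mul]; exact mul_pos (ha φ) (hb φ)
  inv_mem' := fun {a} ha φ => by
    rw [Units.val_inv_eq_inv_val, map_inv₀]; exact inv_pos.mpr (ha φ)

/-- `P_K^1`: the group of narrowly principal fractional ideals of a number field `K`, i.e. the
invertible fractional ideals of the form `a 𝓞_K` with `a ∈ K` totally positive. -/
noncomputable def narrowPrincipalSubgroup (K : Type*) [Field K] [NumberField K] :
    Subgroup (FractionalIdeal (𝓞 K)⁰ K)ˣ :=
  (totallyPositiveUnits K).map (toPrincipalIdeal (𝓞 K) K)

/-- The absolute ideal norm on `P_K^1`. -/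
noncomputable def narrowNorm {K : Type*} [Field K] [NumberField K]
    (I : ↥(narrowPrincipalSubgroup K)) : ℚ :=
  FractionalIdeal.absNorm ((I : (FractionalIdeal (𝓞 K)⁰ K)ˣ) : FractionalIdeal (𝓞 K)⁰ K)

/-!
For a number field `K` of degree `n`, `p 𝓞_K` is prime if and only if `n` divides `v_p (N I)` for
every `I ∈ P_K^1`; this criterion is invariant under a norm-preserving isomorphism.

If `p 𝓞_K` is prime, every nonzero ideal is `(p)^e C` with `C` prime to `p`, so `v_p` of its norm
is `n e`, and fractional ideals are quotients of integral ones. Otherwise some prime `P ∣ p` has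
`N P = p^f` with `0 < f < n`. Writing `p 𝓞_K = P^e C` with `P ∤ C`, the Chinese remainder theorem
gives `α ∈ P \ P²` with `α ≡ 1 mod C`; then `(α) = P J` with `J` prime to `p`, so
`v_p (N (α)) = f`. This only depends on `α` modulo `p²`, and adding a large multiple of `p²` makes
`α` totally positive.
-/

open Module

namespace Ideal

theorem IsMaximal.isCoprime_of_not_le {R : Type*} [CommRing R] {P J : Ideal R}
    (hP : P.IsMaximal) (h : ¬ J ≤ P) : IsCoprime P J :=
  isCoprime_iff_codisjoint.mpr ((isMaximal_def.mp hP).not_le_iff_codisjoint.mp h)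

variable {S : Type*} [CommRing S] [IsDedekindDomain S] [Module.Free ℤ S] [Module.Finite ℤ S]
  {p : ℕ}

theorem span_natCast_ne_bot (hp : p.Prime) : span {(p : S)} ≠ ⊥ := fun h =>
  (pow_pos hp.pos (finrank ℤ S)).ne' (by rw [← absNorm_span_natCast, h, absNorm_bot])

theorem not_dvd_absNorm_of_isCoprime (hp : p.Prime) {I : Ideal S}
    (hI : IsCoprime I (span {(p : S)})) : ¬ p ∣ absNorm I := by
  intro hdvd
  obtain ⟨P, hP, hPp, hPI⟩ := exists_isMaximal_dvd_of_dvd_absNorm' hp I hdvd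
  have hpP : (p : S) ∈ P := by
    simpa using (hPp ▸ mem_span_singleton_self (p : ℤ) : (p : ℤ) ∈ P.under ℤ)
  exact hP.ne_top <| top_le_iff.mp <|
    hI.sup_eq ▸ sup_le (le_of_dvd hPI) ((span_singleton_le_iff_mem _).mpr hpP)

theorem padicValNat_absNorm_mul_of_isCoprime (hp : p.Prime) {I J : Ideal S} (hI : I ≠ ⊥)
    (hJ : IsCoprime J (span {(p : S)})) :
    padicValNat p (absNorm (I * J)) = padicValNat p (absNorm I) := by
  have : Fact p.Prime := ⟨hp⟩
  have hJp := not_dvd_absNorm_of_isCoprime hp hJ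
  have hJ0 : absNorm J ≠ 0 := fun h => hJp (h ▸ dvd_zero p)
  rw [map_mul, padicValNat.mul (absNorm_eq_zero_iff.not.mpr hI) hJ0,
    padicValNat.eq_zero_of_not_dvd hJp, add_zero]

theorem finrank_dvd_padicValNat_absNorm (hp : p.Prime) (hpS : (span {(p : S)}).IsPrime)
    {J : Ideal S} (hJ : J ≠ ⊥) : finrank ℤ S ∣ padicValNat p (absNorm J) := by
  have : Fact p.Prime := ⟨hp⟩
  have hp0 := span_natCast_ne_bot (S := S) hp
  obtain ⟨e, C, hC, rfl⟩ :=
    WfDvdMonoid.max_power_factor hJ (prime_of_isPrime hp0 hpS).irreducible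
  have hCp : IsCoprime C (span {(p : S)}) :=
    ((hpS.isMaximal hp0).isCoprime_of_not_le fun h => hC (dvd_iff_le.mpr h)).symm
  rw [padicValNat_absNorm_mul_of_isCoprime hp (pow_ne_zero _ hp0) hCp, map_pow,
    absNorm_span_natCast, ← pow_mul, padicValNat.prime_pow]
  exact dvd_mul_right _ _

theorem exists_isMaximal_absNorm_eq_pow_of_not_isPrime (hp : p.Prime)
    (h : ¬ (span {(p : S)}).IsPrime) :
    ∃ P : Ideal S, P.IsMaximal ∧ (p : S) ∈ P ∧
      ∃ f, 0 < f ∧ f < finrank ℤ S ∧ absNorm P = p ^ f := by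
  have hnorm := absNorm_span_natCast (S := S) p
  have htop : span {(p : S)} ≠ ⊤ := fun h => by
    rw [h, absNorm_top] at hnorm
    exact (Nat.one_lt_pow finrank_pos.ne' hp.one_lt).ne hnorm
  obtain ⟨P, hP, hpP⟩ := exists_le_maximal _ htop
  obtain ⟨C, hC⟩ := dvd_iff_le.mpr hpP
  obtain ⟨f, hf, hPf⟩ := (Nat.dvd_prime_pow hp).mp (hnorm ▸ absNorm_dvd_absNorm_of_le hpP)
  refine ⟨P, hP, (span_singleton_le_iff_mem _).mp hpP, f, ?_, lt_of_le_of_ne hf ?_, hPf⟩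
  · refine Nat.pos_of_ne_zero fun h0 => hP.ne_top (absNorm_eq_one_iff.mp ?_)
    rw [hPf, h0, pow_zero]
  · rintro rfl
    have hC1 : absNorm C = 1 := by
      rw [hC, map_mul, hPf] at hnorm
      exact Nat.eq_of_mul_eq_mul_left (pow_pos hp.pos _) (hnorm.trans (mul_one _).symm)
    rw [hC, absNorm_eq_one_iff.mp hC1, mul_top] at h
    exact h hP.isPrime

theorem padicValNat_absNorm_span_eq_of_mem_of_notMem (hp : p.Prime) {P C : Ideal S}
    (hP : P.IsMaximal) {e : ℕ} (hspan : span {(p : S)} = P ^ e * C) {β : S} (hβP : β ∈ P)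
    (hβP2 : β ∉ P ^ 2) (hβC : β - 1 ∈ C) :
    padicValNat p (absNorm (span {β})) = padicValNat p (absNorm P) := by
  obtain ⟨J, hJ⟩ := dvd_iff_le.mpr ((span_singleton_le_iff_mem _).mpr hβP)
  have hPbot : P ≠ ⊥ := by
    rintro rfl
    exact hβP2 (by simpa using hβP)
  have hJP : IsCoprime J P := by
    refine (hP.isCoprime_of_not_le fun hJP => hβP2 ?_).symm
    rw [sq]
    exact mul_mono_right hJP (hJ ▸ mem_span_singleton_self β)
  have hJC : IsCoprime J C := by
    refine isCoprime_iff_exists.mpr ⟨β, mul_le_right (hJ ▸ mem_span_singleton_self β), 1 - β, ?_,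
      add_sub_cancel β 1⟩
    simpa using C.neg_mem hβC
  rw [hJ, padicValNat_absNorm_mul_of_isCoprime hp hPbot (hspan ▸ hJP.pow_right.mul_right hJC)]

theorem exists_forall_padicValNat_absNorm_span_add_eq (hp : p.Prime) {P : Ideal S}
    (hP : P.IsMaximal) (hpP : (p : S) ∈ P) :
    ∃ α : S, ∀ y : S,
      padicValNat p (absNorm (span {α + p ^ 2 * y})) = padicValNat p (absNorm P) := by
  have hp0 := span_natCast_ne_bot (S := S) hp
  have hPbot : P ≠ ⊥ := fun h => hp0 (eq_bot_iff.mpr (h ▸ (span_singleton_le_iff_mem _).mpr hpP))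
  obtain ⟨e, C, hC, hspan⟩ :=
    WfDvdMonoid.max_power_factor hp0 (prime_of_isPrime hPbot hP.isPrime).irreducible
  have hpC : (p : S) ∈ C := (hspan ▸ mul_le_right : span {(p : S)} ≤ C) (mem_span_singleton_self _)
  obtain ⟨π, hπP, hπP2⟩ := exists_mem_pow_notMem_pow_succ P hPbot hP.ne_top 1
  rw [pow_one] at hπP
  obtain ⟨a, ha, c, hc, hac⟩ :=
    (hP.isCoprime_of_not_le fun h => hC (dvd_iff_le.mpr h)).pow_left (m := 2).exists
  have hβπ : ∀ y : S, c * π + a + p ^ 2 * y - π ∈ P ^ 2 := fun y => by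
    rw [show c * π + a + p ^ 2 * y - π = a * (1 - π) + p ^ 2 * y by linear_combination π * hac]
    exact add_mem (mul_mem_right _ _ ha) (mul_mem_right _ _ (pow_mem_pow hpP 2))
  refine ⟨c * π + a, fun y => padicValNat_absNorm_span_eq_of_mem_of_notMem hp hP hspan ?_ ?_ ?_⟩
  · simpa using add_mem (pow_le_self two_ne_zero (hβπ y)) hπP
  · exact fun h => hπP2 (by simpa using sub_mem h (hβπ y))
  · rw [show c * π + a + p ^ 2 * y - 1 = c * (π - 1) + p * (p * y) by linear_combination hac]
    exact add_mem (mul_mem_right _ _ hc) (mul_mem_right _ _ hpC)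

end Ideal

theorem FractionalIdeal.finrank_dvd_padicValRat_absNorm {S K : Type*} [CommRing S]
    [IsDedekindDomain S] [Module.Free ℤ S] [Module.Finite ℤ S] [Field K] [Algebra S K]
    [IsFractionRing S K] {p : ℕ} (hp : p.Prime) (hpS : (Ideal.span {(p : S)}).IsPrime)
    {I : FractionalIdeal S⁰ K} (hI : I ≠ 0) :
    (finrank ℤ S : ℤ) ∣ padicValRat p (absNorm I) := by
  have : Fact p.Prime := ⟨hp⟩
  have hnum : I.num ≠ ⊥ := num_eq_zero_iff.not.mpr hI
  have hden : Ideal.span {(I.den : S)} ≠ ⊥ := by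
    simp [nonZeroDivisors.coe_ne_zero I.den]
  rw [absNorm_eq, ← Nat.cast_natAbs, ← Ideal.absNorm_span_singleton,
    padicValRat.div (Nat.cast_ne_zero.mpr (Ideal.absNorm_eq_zero_iff.not.mpr hnum))
      (Nat.cast_ne_zero.mpr (Ideal.absNorm_eq_zero_iff.not.mpr hden)), padicValRat.of_nat,
    padicValRat.of_nat]
  exact dvd_sub (Int.natCast_dvd_natCast.mpr (Ideal.finrank_dvd_padicValNat_absNorm hp hpS hnum))
    (Int.natCast_dvd_natCast.mpr (Ideal.finrank_dvd_padicValNat_absNorm hp hpS hden))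

namespace NumberField

variable {K : Type*} [Field K] [NumberField K]

theorem exists_forall_pos_add_mul_natCast (x : 𝓞 K) {m : ℕ} (hm : 0 < m) :
    ∃ t : ℕ, ∀ ψ : K →+* ℝ, 0 < ψ ((x + m * t : 𝓞 K) : K) := by
  obtain ⟨t, ht⟩ := (Filter.eventually_all.mpr fun ψ : K →+* ℝ =>
    tendsto_natCast_atTop_atTop.eventually_gt_atTop (-ψ x)).exists
  refine ⟨t, fun ψ => ?_⟩
  have : (t : ℝ) ≤ m * t := le_mul_of_one_le_left t.cast_nonneg (by exact_mod_cast hm)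
  push_cast
  simp only [map_add, map_mul, map_natCast]
  linarith [ht ψ]

theorem exists_not_dvd_padicValRat_narrowNorm {p : ℕ} (hp : p.Prime)
    (h : ¬ (Ideal.span {(p : 𝓞 K)}).IsPrime) :
    ∃ I : narrowPrincipalSubgroup K, ¬ (finrank ℚ K : ℤ) ∣ padicValRat p (narrowNorm I) := by
  have : Fact p.Prime := ⟨hp⟩
  obtain ⟨P, hP, hpP, f, hf0, hfn, hPf⟩ :=
    Ideal.exists_isMaximal_absNorm_eq_pow_of_not_isPrime hp h
  obtain ⟨α, hα⟩ := Ideal.exists_forall_padicValNat_absNorm_span_add_eq hp hP hpP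
  obtain ⟨t, ht⟩ := exists_forall_pos_add_mul_natCast α (pow_pos hp.pos 2)
  have hβ : padicValNat p (Ideal.absNorm (Ideal.span {α + ((p ^ 2 : ℕ) : 𝓞 K) * t})) = f := by
    rw [Nat.cast_pow, hα, hPf, padicValNat.prime_pow]
  have hβ0 : ((α + ((p ^ 2 : ℕ) : 𝓞 K) * t : 𝓞 K) : K) ≠ 0 := fun h0 => by
    rw [show α + ((p ^ 2 : ℕ) : 𝓞 K) * t = 0 by exact_mod_cast h0] at hβ
    simp only [Set.singleton_zero, Ideal.span_zero, Ideal.absNorm_bot, padicValNat_zero_right] at hβ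
    omega
  refine ⟨⟨toPrincipalIdeal (𝓞 K) K (Units.mk0 _ hβ0), Subgroup.mem_map_of_mem _ ht⟩, ?_⟩
  rw [narrowNorm, coe_toPrincipalIdeal, Units.val_mk0, ← FractionalIdeal.coeIdeal_span_singleton,
    FractionalIdeal.coeIdeal_absNorm, padicValRat.of_nat, hβ, ← RingOfIntegers.rank]
  exact_mod_cast Nat.not_dvd_of_pos_of_lt hf0 hfn

theorem span_natCast_isPrime_iff_forall_dvd_padicValRat_narrowNorm {p : ℕ} (hp : p.Prime) :
    (Ideal.span {(p : 𝓞 K)}).IsPrime ↔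
      ∀ I : narrowPrincipalSubgroup K, (finrank ℚ K : ℤ) ∣ padicValRat p (narrowNorm I) := by
  refine ⟨fun h I => ?_, fun h => by_contra fun hn => ?_⟩
  · rw [← RingOfIntegers.rank]
    exact FractionalIdeal.finrank_dvd_padicValRat_absNorm hp h (Units.ne_zero _)
  · obtain ⟨I, hI⟩ := exists_not_dvd_padicValRat_narrowNorm hp hn
    exact hI (h I)

end NumberField

/-- If `K` and `L` are number fields of the same degree and there is a
norm-preserving group isomorphism `P_K^1 ≃ P_L^1`, then a rational prime `p` is non-split in `K`
iff it is non-split in `L`. -/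
theorem span_isPrime_iff_of_narrowPrincipal_isom
    (K L : Type*) [Field K] [NumberField K] [Field L] [NumberField L]
    (hdeg : Module.finrank ℚ K = Module.finrank ℚ L)
    (φ : ↥(narrowPrincipalSubgroup K) ≃* ↥(narrowPrincipalSubgroup L))
    (hφ : ∀ I : ↥(narrowPrincipalSubgroup K), narrowNorm (φ I) = narrowNorm I)
    (p : ℕ) (hp : p.Prime) :
    (Ideal.span {(p : 𝓞 K)}).IsPrime ↔ (Ideal.span {(p : 𝓞 L)}).IsPrime := by
  rw [span_natCast_isPrime_iff_forall_dvd_padicValRat_narrowNorm hp,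
    span_natCast_isPrime_iff_forall_dvd_padicValRat_narrowNorm hp, hdeg]
  exact φ.toEquiv.forall_congr fun I => by rw [← hφ I]; rfl
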